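/- arXiv:1205.0143 — 7 statements merged into one kernel-verified Lean document; each statement's English description precedes it below -/
import Mathlib

section
/- Let F be a group, R ⊆ F, Φ ⊆ End(F), and let N be the normal closure of ⋃_{σ∈Φ*} R^σ in F. If S is a subset of N, then the normal closure of ⋃_{σ∈Φ*} (R ∪ S)^σ equals N. -/
/-! The set `⋃_{σ ∈ Φ*} R^σ` is mapped into itself by every `τ ∈ Φ*`, hence so is its normal
closure `N`; so `S ⊆ N` gives `S^σ ⊆ N` for every `σ ∈ Φ*`, and the new relators add nothing. -/

open Set Subgroup

theorem Subgroup.map_normalClosure_le_of_image_subset {G H : Type*} [Group G] [Group H]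
    (f : G →* H) {s : Set G} {t : Set H} (h : f '' s ⊆ t) :
    (normalClosure s).map f ≤ normalClosure t := by
  rw [map_le_iff_le_comap]
  have : (normalClosure t).comap f |>.Normal := normalClosure_normal.comap f
  exact normalClosure_le_normal fun x hx => subset_normalClosure (h ⟨x, hx, rfl⟩)

theorem Submonoid.image_iUnion_image_subset {F : Type*} [Group F] {M : Submonoid (Monoid.End F)}
    {τ : Monoid.End F} (hτ : τ ∈ M) (R : Set F) :
    τ '' (⋃ σ ∈ M, σ '' R) ⊆ ⋃ σ ∈ M, σ '' R := by
  rw [image_iUnion₂]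
  refine iUnion₂_subset fun σ hσ => ?_
  rw [image_image]
  exact subset_iUnion₂_of_subset (τ * σ) (M.mul_mem hτ hσ) subset_rfl

theorem Submonoid.image_normalClosure_iUnion_image_subset {F : Type*} [Group F]
    {M : Submonoid (Monoid.End F)} {τ : Monoid.End F} (hτ : τ ∈ M) (R : Set F) :
    τ '' (normalClosure (⋃ σ ∈ M, σ '' R) : Set F) ⊆ normalClosure (⋃ σ ∈ M, σ '' R) :=
  fun _ ⟨x, hx, hτx⟩ =>
    map_normalClosure_le_of_image_subset τ (image_iUnion_image_subset hτ R) ⟨x, hx, hτx⟩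

/-- Tietze transformation adding iterated relations: if `S` is contained in the
normal closure of `⋃_{σ ∈ Φ*} R^σ`, then the normal closure of
`⋃_{σ ∈ Φ*} (R ∪ S)^σ` equals that normal closure. -/
theorem normalClosure_add_iterated_relations {F : Type*} [Group F]
    (R S : Set F) (Φ : Set (Monoid.End F))
    (hS : S ⊆ (Subgroup.normalClosure (⋃ σ ∈ Submonoid.closure Φ, ⇑σ '' R) : Set F)) :
    Subgroup.normalClosure (⋃ σ ∈ Submonoid.closure Φ, ⇑σ '' (R ∪ S)) =
      Subgroup.normalClosure (⋃ σ ∈ Submonoid.closure Φ, ⇑σ '' R) := by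
  refine le_antisymm (normalClosure_le_normal (iUnion₂_subset fun σ hσ => ?_))
    (normalClosure_mono (iUnion₂_mono fun _ _ => image_mono subset_union_left))
  rw [image_union]
  exact union_subset
    ((subset_iUnion₂ (s := fun σ (_ : σ ∈ Submonoid.closure Φ) => ⇑σ '' R) σ hσ).trans
      subset_normalClosure)
    ((image_mono hS).trans (Submonoid.image_normalClosure_iUnion_image_subset hσ R))
end

section
/- Let F be a group, R ⊆ F, Φ ⊆ End(F), and S ⊆ R. Then the set Q₀ := ⋃_{σ∈Φ*} R^σ and the set Q₁ := S ∪ ⋃_{σ∈Φ*} ((R \ S) ∪ {ψ(r) : r ∈ S, ψ ∈ Φ})^σ have equal normal closures in F (in fact Q₀ = Q₁ as subsets of F). -/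
/-!
Every `σ ∈ Φ*` is either `1` or `τ * ψ` with `τ ∈ Φ*` and `ψ ∈ Φ`. So for a relation `r ∈ S`,
`σ r` is either `r` itself, kept as a fixed relation, or `τ (ψ r)`, an image of the new iterated
relation `ψ r`; conversely `τ (ψ r) = (τ * ψ) r`. Hence the two sets of relations coincide.
-/

theorem Submonoid.eq_one_or_exists_mul_of_mem_closure {M : Type*} [Monoid M] {s : Set M} {x : M}
    (hx : x ∈ Submonoid.closure s) : x = 1 ∨ ∃ y ∈ Submonoid.closure s, ∃ z ∈ s, x = y * z := by
  induction hx using Submonoid.closure_induction_right with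
  | one => exact .inl rfl
  | mul_right y hy z hz _ => exact .inr ⟨y, hy, z, hz, rfl⟩

namespace Monoid.End

variable {F : Type*} [MulOneClass F] {Φ : Set (Monoid.End F)} {R S : Set F}

def iteratedRelations (Φ : Set (Monoid.End F)) (R : Set F) : Set F :=
  ⋃ σ ∈ Submonoid.closure Φ, ⇑σ '' R

theorem apply_mem_iteratedRelations {σ : Monoid.End F} (hσ : σ ∈ Submonoid.closure Φ) {r : F}
    (hr : r ∈ R) : σ r ∈ iteratedRelations Φ R :=
  Set.mem_biUnion hσ ⟨r, hr, rfl⟩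

theorem subset_iteratedRelations : R ⊆ iteratedRelations Φ R :=
  fun _ hr ↦ apply_mem_iteratedRelations (Submonoid.one_mem _) hr

theorem iteratedRelations_mono {R R' : Set F} (h : R ⊆ R') :
    iteratedRelations Φ R ⊆ iteratedRelations Φ R' :=
  Set.biUnion_mono subset_rfl fun _ _ ↦ Set.image_mono h

theorem iteratedRelations_subset_iff {Q : Set F} :
    iteratedRelations Φ R ⊆ Q ↔ ∀ σ ∈ Submonoid.closure Φ, ∀ r ∈ R, σ r ∈ Q := by
  simp only [iteratedRelations, Set.iUnion₂_subset_iff, Set.image_subset_iff]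
  rfl

theorem apply_mem_union_iteratedRelations_of_mem_fixed {σ : Monoid.End F}
    (hσ : σ ∈ Submonoid.closure Φ) {r : F} (hr : r ∈ S) :
    σ r ∈ S ∪ iteratedRelations Φ {w | ∃ r ∈ S, ∃ ψ ∈ Φ, w = ψ r} := by
  obtain rfl | ⟨τ, hτ, ψ, hψ, rfl⟩ := Submonoid.eq_one_or_exists_mul_of_mem_closure hσ
  · exact .inl hr
  · exact .inr (apply_mem_iteratedRelations hτ ⟨r, hr, ψ, hψ, rfl⟩)

theorem iteratedRelations_eq_fixed_union_iteratedRelations (hS : S ⊆ R) :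
    iteratedRelations Φ R =
      S ∪ iteratedRelations Φ ((R \ S) ∪ {w | ∃ r ∈ S, ∃ ψ ∈ Φ, w = ψ r}) := by
  apply subset_antisymm
  · rw [iteratedRelations_subset_iff]
    intro σ hσ r hr
    by_cases hrS : r ∈ S
    · exact Set.union_subset_union_right _ (iteratedRelations_mono Set.subset_union_right)
        (apply_mem_union_iteratedRelations_of_mem_fixed hσ hrS)
    · exact .inr (apply_mem_iteratedRelations hσ (.inl ⟨hr, hrS⟩))
  · refine Set.union_subset (hS.trans subset_iteratedRelations) ?_
    rw [iteratedRelations_subset_iff]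
    rintro σ hσ _ (⟨hr, -⟩ | ⟨r, hr, ψ, hψ, rfl⟩)
    · exact apply_mem_iteratedRelations hσ hr
    · exact apply_mem_iteratedRelations (mul_mem hσ (Submonoid.subset_closure hψ)) (hS hr)

end Monoid.End

/-- Tietze transformation interchanging fixed and iterated relations:
for `S ⊆ R`, the sets `Q₀ = ⋃_{σ∈Φ*} R^σ` and
`Q₁ = S ∪ ⋃_{σ∈Φ*} ((R \ S) ∪ {ψ(r) : r ∈ S, ψ ∈ Φ})^σ`
coincide, and in particular have the same normal closure in `F`. -/
theorem iterated_relations_interchange_fixed {F : Type*} [Group F]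
    (R S : Set F) (Φ : Set (Monoid.End F)) (hS : S ⊆ R) :
    (⋃ σ ∈ Submonoid.closure Φ, ⇑σ '' R) =
        S ∪ ⋃ σ ∈ Submonoid.closure Φ,
          ⇑σ '' ((R \ S) ∪ {w | ∃ r ∈ S, ∃ ψ ∈ Φ, w = ψ r}) ∧
      Subgroup.normalClosure (⋃ σ ∈ Submonoid.closure Φ, ⇑σ '' R) =
        Subgroup.normalClosure (S ∪ ⋃ σ ∈ Submonoid.closure Φ,
          ⇑σ '' ((R \ S) ∪ {w | ∃ r ∈ S, ∃ ψ ∈ Φ, w = ψ r})) := by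
  have h := Monoid.End.iteratedRelations_eq_fixed_union_iteratedRelations (Φ := Φ) hS
  exact ⟨h, congrArg Subgroup.normalClosure h⟩
end

section
/- Let F be a group, R ⊆ F, and let Φ, Ψ ⊆ End(F) with Ψ ⊆ Φ. Set Φ̂ := (Φ \ Ψ) ∪ {σ∘ψ : ψ ∈ Ψ, σ ∈ Φ} (maps applied as g ↦ ψ(σ(g)) when elements act on the right, i.e. g^{σψ} = (g^σ)^ψ). Then ⋃_{σ∈Φ*} R^σ = ⋃_{σ∈Φ̂*} (R ∪ ⋃_{ψ∈Ψ} R^ψ)^σ. -/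
/-!
Every word in `Φ` is a word in `Φ̂`, possibly followed by a single letter of `Ψ`: reading the
word from the left, a letter of `Ψ` that is not the last one is absorbed, together with the letter
after it, into a letter `ψσ` of `Φ̂`. Conversely every word in `Φ̂`, with or without a trailing
letter of `Ψ`, is a word in `Φ`.
-/

open Pointwise

namespace Submonoid

variable {M : Type*} [Monoid M]

/-- The paper's `Φ̂`: its `σψ`, with endomorphisms acting on the right, is `ψ * σ` in `Monoid.End`. -/
def modifySubstitutions (Φ Ψ : Set M) : Set M :=
  (Φ \ Ψ) ∪ {τ | ∃ ψ ∈ Ψ, ∃ σ ∈ Φ, τ = ψ * σ}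

theorem closure_modifySubstitutions_le {Φ Ψ : Set M} (hΨ : Ψ ⊆ Φ) :
    closure (modifySubstitutions Φ Ψ) ≤ closure Φ := by
  refine closure_le.2 ?_
  rintro τ (⟨hτ, -⟩ | ⟨ψ, hψ, σ, hσ, rfl⟩)
  · exact subset_closure hτ
  · exact mul_mem (subset_closure (hΨ hψ)) (subset_closure hσ)

theorem coe_closure_eq_closure_modifySubstitutions_union_mul {Φ Ψ : Set M} (hΨ : Ψ ⊆ Φ) :
    (closure Φ : Set M) =
      (closure (modifySubstitutions Φ Ψ) : Set M) ∪ closure (modifySubstitutions Φ Ψ) * Ψ := by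
  set M' := closure (modifySubstitutions Φ Ψ)
  have hle := closure_modifySubstitutions_le hΨ
  refine subset_antisymm (fun x hx => ?_) (Set.union_subset (fun x hx => hle hx) ?_)
  · induction hx using closure_induction_right with
    | one => exact Or.inl (one_mem M')
    | mul_right μ _ φ hφ ih =>
      rcases ih with hμ | ⟨ν, hν, ψ, hψ, rfl⟩
      · by_cases hφΨ : φ ∈ Ψ
        · exact Or.inr ⟨μ, hμ, φ, hφΨ, rfl⟩
        · exact Or.inl (mul_mem hμ (subset_closure (Or.inl ⟨hφ, hφΨ⟩)))
      · have hψφ : ψ * φ ∈ M' := subset_closure (Or.inr ⟨ψ, hψ, φ, hφ, rfl⟩)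
        exact Or.inl (mul_assoc ν ψ φ ▸ mul_mem hν hψφ)
  · rintro _ ⟨μ, hμ, ψ, hψ, rfl⟩
    exact mul_mem (hle hμ) (subset_closure (hΨ hψ))

end Submonoid

theorem Monoid.End.biUnion_image_union_mul {F : Type*} [MulOne F]
    (R : Set F) (A Ψ : Set (Monoid.End F)) :
    ⋃ σ ∈ A ∪ A * Ψ, ⇑σ '' R = ⋃ μ ∈ A, ⇑μ '' (R ∪ ⋃ ψ ∈ Ψ, ⇑ψ '' R) := by
  ext x
  simp only [Set.mem_iUnion, Set.mem_image, Set.mem_union, Set.mem_mul]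
  constructor
  · rintro ⟨σ, hσ | ⟨μ, hμ, ψ, hψ, rfl⟩, r, hr, rfl⟩
    · exact ⟨σ, hσ, r, Or.inl hr, rfl⟩
    · exact ⟨μ, hμ, ψ r, Or.inr ⟨ψ, hψ, r, hr, rfl⟩, rfl⟩
  · rintro ⟨μ, hμ, _, hr | ⟨ψ, hψ, r, hr, rfl⟩, rfl⟩
    · exact ⟨μ, Or.inl hμ, _, hr, rfl⟩
    · exact ⟨μ * ψ, Or.inr ⟨μ, hμ, ψ, hψ, rfl⟩, r, hr, rfl⟩

/-- Tietze transformation modifying the set of substitutions: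
with `Ψ ⊆ Φ` and `Φ̂ = (Φ \ Ψ) ∪ {σψ : ψ ∈ Ψ, σ ∈ Φ}` (endomorphisms acting on
the right, so `g^{σψ} = (g^σ)^ψ`, i.e. the composite `ψ ∘ σ`, which is `ψ * σ`
in `Monoid.End`), one has
`⋃_{σ∈Φ*} R^σ = ⋃_{σ∈Φ̂*} (R ∪ ⋃_{ψ∈Ψ} R^ψ)^σ`. -/
theorem iterated_relations_modify_substitutions {F : Type*} [Group F]
    (R : Set F) (Φ Ψ : Set (Monoid.End F)) (hΨ : Ψ ⊆ Φ) :
    (⋃ σ ∈ Submonoid.closure Φ, ⇑σ '' R) =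
      ⋃ σ ∈ Submonoid.closure ((Φ \ Ψ) ∪ {τ | ∃ ψ ∈ Ψ, ∃ σ ∈ Φ, τ = ψ * σ}),
        ⇑σ '' (R ∪ ⋃ ψ ∈ Ψ, ⇑ψ '' R) := by
  have h := congrArg (fun T : Set (Monoid.End F) => ⋃ σ ∈ T, ⇑σ '' R)
    (Submonoid.coe_closure_eq_closure_modifySubstitutions_union_mul hΨ)
  simp only [Monoid.End.biUnion_image_union_mul, SetLike.mem_coe] at h
  exact h
end

section
/- Let F be a group, R ⊆ F, Φ ⊆ End(F), and let N be the normal closure of ⋃_{σ∈Φ*} R^σ in F. If Ψ ⊆ End(F) is a set of endomorphisms each of which leaves N invariant (ψ(N) ⊆ N for all ψ ∈ Ψ), then the normal closure of ⋃_{σ∈(Φ∪Ψ)*} R^σ in F equals N. -/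
/-!
Let `S = ⋃_{σ∈Φ*} R^σ` and `N` its normal closure. The endomorphisms mapping `N` into itself form
a submonoid of `End(F)`. It contains `Φ`, because each `φ ∈ Φ` maps `S` into `S`, and an
endomorphism mapping `S` into the normal subgroup `N` maps its normal closure into `N`; it contains
`Ψ` by hypothesis. Hence it contains `(Φ ∪ Ψ)*`, so every `R^σ` with `σ ∈ (Φ ∪ Ψ)*` lies in `N`.
-/

namespace Subgroup

variable {G : Type*} [Group G]

def invariantEnds (N : Subgroup G) : Submonoid (Monoid.End G) where
  carrier := {σ | ∀ x ∈ N, σ x ∈ N}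
  one_mem' _ hx := hx
  mul_mem' hσ hτ x hx := hσ _ (hτ x hx)

theorem mem_invariantEnds_normalClosure_of_image_subset {S : Set G} {σ : Monoid.End G}
    (h : σ '' S ⊆ normalClosure S) : σ ∈ (normalClosure S).invariantEnds := by
  have : ((normalClosure S).comap (σ : G →* G)).Normal := normalClosure_normal.comap _
  exact fun _ hx => normalClosure_le_normal (N := (normalClosure S).comap (σ : G →* G))
    (fun y hy => h ⟨y, hy, rfl⟩) hx

end Subgroup

namespace Submonoid

variable {G : Type*} [Monoid G]

theorem subset_iUnion_image (M : Submonoid (Monoid.End G)) (R : Set G) :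
    R ⊆ ⋃ σ ∈ M, ⇑σ '' R :=
  fun r hr => Set.mem_biUnion M.one_mem ⟨r, hr, rfl⟩

theorem image_iUnion_image_subset_s5 {M : Submonoid (Monoid.End G)} (R : Set G)
    {τ : Monoid.End G} (hτ : τ ∈ M) : τ '' (⋃ σ ∈ M, ⇑σ '' R) ⊆ ⋃ σ ∈ M, ⇑σ '' R := by
  rintro _ ⟨_, hx, rfl⟩
  obtain ⟨σ, hσ, r, hr, rfl⟩ := Set.mem_iUnion₂.1 hx
  exact Set.mem_biUnion (M.mul_mem hτ hσ) ⟨r, hr, rfl⟩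

end Submonoid

open Subgroup in
/-- Tietze transformation adding substitutions: if every `ψ ∈ Ψ` leaves the
normal closure `N` of `⋃_{σ∈Φ*} R^σ` invariant, then the normal closure of
`⋃_{σ∈(Φ∪Ψ)*} R^σ` equals `N`. -/
theorem normalClosure_add_substitutions {F : Type*} [Group F]
    (R : Set F) (Φ Ψ : Set (Monoid.End F))
    (hΨ : ∀ ψ ∈ Ψ, ∀ x ∈ Subgroup.normalClosure (⋃ σ ∈ Submonoid.closure Φ, ⇑σ '' R),
      ψ x ∈ Subgroup.normalClosure (⋃ σ ∈ Submonoid.closure Φ, ⇑σ '' R)) :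
    Subgroup.normalClosure (⋃ σ ∈ Submonoid.closure (Φ ∪ Ψ), ⇑σ '' R) =
      Subgroup.normalClosure (⋃ σ ∈ Submonoid.closure Φ, ⇑σ '' R) := by
  set S := ⋃ σ ∈ Submonoid.closure Φ, ⇑σ '' R
  have hinv : Submonoid.closure (Φ ∪ Ψ) ≤ (normalClosure S).invariantEnds := by
    refine Submonoid.closure_le.2 (Set.union_subset (fun φ hφ => ?_) hΨ)
    exact mem_invariantEnds_normalClosure_of_image_subset <|
      (Submonoid.image_iUnion_image_subset_s5 R (Submonoid.subset_closure hφ)).trans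
        subset_normalClosure
  refine le_antisymm (normalClosure_le_normal ?_) (normalClosure_mono ?_)
  · simp only [Set.iUnion_subset_iff, Set.image_subset_iff]
    exact fun σ hσ r hr =>
      hinv hσ r (subset_normalClosure (Submonoid.subset_iUnion_image _ R hr))
  · exact Set.biUnion_mono (Submonoid.closure_mono Set.subset_union_left) fun _ _ => subset_rfl
end

section
/- Let F be the free group on generators a, b and let σ be the endomorphism of F induced by a ↦ ab, b ↦ b². Let N be the normal closure in F of the set {σⁿ(a²), σⁿ(b²) : n ≥ 0}. Then the quotient F/N is an abelian group in which every element has order dividing 2; in particular F/N is a quotient of ℤ/2 × ℤ/2 and hence finite, so F/N is not isomorphic to the infinite group ℤ/2 * ℤ/2. -/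
/-- The free group on two generators `a = of true`, `b = of false`. -/
abbrev F₂ : Type := FreeGroup Bool

/-- The endomorphism of `F(a,b)` induced by `a ↦ a·b`, `b ↦ b·b`. -/
def σab : Monoid.End F₂ :=
  (FreeGroup.lift fun g : Bool =>
    if g then FreeGroup.of true * FreeGroup.of false
    else FreeGroup.of false * FreeGroup.of false : FreeGroup Bool →* FreeGroup Bool)

/-- Normal closure of `{σⁿ(a²), σⁿ(b²) : n ≥ 0}`. -/
def Nab : Subgroup F₂ :=
  Subgroup.normalClosure
    {w : F₂ | ∃ n : ℕ, w = (σab ^ n) (FreeGroup.of true ^ 2) ∨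
      w = (σab ^ n) (FreeGroup.of false ^ 2)}

instance : Nab.Normal := Subgroup.normalClosure_normal

/-! Since `σ(a²) = abab`, the images `A, B` of `a, b` in `F/N` satisfy `A² = B² = (AB)² = 1`,
so `AB = (AB)⁻¹ = B⁻¹A⁻¹ = BA`. Hence the projection `F → F/N` factors through the map
`ℤ/2 × ℤ/2 → F/N` sending the two generators to `A` and `B`. On the other hand `ℤ/2 * ℤ/2` maps onto the infinite
dihedral group, sending the product of its two generators to a rotation of infinite order. -/

open FreeGroup (of)

section Group

variable {G : Type*} [Group G]

theorem commute_of_sq_eq_one {x y : G} (hx : x ^ 2 = 1) (hy : y ^ 2 = 1)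
    (hxy : (x * y) ^ 2 = 1) : Commute x y := by
  have inv_self {z : G} (hz : z ^ 2 = 1) : z⁻¹ = z := by
    rwa [inv_eq_iff_mul_eq_one, ← sq]
  calc x * y = (x * y)⁻¹ := (inv_self hxy).symm
    _ = y * x := by rw [mul_inv_rev, inv_self hx, inv_self hy]

def zmodPowHom (n : ℕ) [NeZero n] (x : G) (hx : x ^ n = 1) : Multiplicative (ZMod n) →* G where
  toFun z := x ^ z.toAdd.val
  map_one' := by simp
  map_mul' z w := by rw [toAdd_mul, ZMod.val_add, ← pow_eq_pow_mod _ hx, pow_add]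

@[simp]
theorem zmodPowHom_ofAdd (n : ℕ) [NeZero n] (x : G) (hx : x ^ n = 1) (k : ZMod n) :
    zmodPowHom n x hx (.ofAdd k) = x ^ k.val :=
  rfl

theorem Commute.zmodPowHom {m n : ℕ} [NeZero m] [NeZero n] {x y : G} (h : Commute x y)
    (hx : x ^ m = 1) (hy : y ^ n = 1) (k : Multiplicative (ZMod m))
    (l : Multiplicative (ZMod n)) : Commute (zmodPowHom m x hx k) (zmodPowHom n y hy l) :=
  h.pow_pow _ _

theorem exists_surjective_zmod_two_prod_of_sq_eq_one (f : FreeGroup Bool →* G)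
    (hf : Function.Surjective f) (ha : f (of true) ^ 2 = 1) (hb : f (of false) ^ 2 = 1)
    (hab : (f (of true) * f (of false)) ^ 2 = 1) :
    ∃ q : Multiplicative (ZMod 2) × Multiplicative (ZMod 2) →* G, Function.Surjective q := by
  let q := MonoidHom.noncommCoprod (zmodPowHom 2 _ ha) (zmodPowHom 2 _ hb)
    ((commute_of_sq_eq_one ha hb hab).zmodPowHom ha hb)
  let s : FreeGroup Bool →* Multiplicative (ZMod 2) × Multiplicative (ZMod 2) :=
    FreeGroup.lift fun i => if i then (.ofAdd 1, 1) else (1, .ofAdd 1)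
  have hqs : q.comp s = f := by
    ext i
    cases i <;> simp [q, s, ZMod.val_one]
  refine ⟨q, Function.Surjective.of_comp (g := s) ?_⟩
  rwa [← MonoidHom.coe_comp, hqs]

theorem mul_comm_of_surjective {H : Type*} [CommGroup H] (q : H →* G)
    (hq : Function.Surjective q) (g h : G) : g * h = h * g := by
  obtain ⟨g, rfl⟩ := hq g
  obtain ⟨h, rfl⟩ := hq h
  rw [← map_mul, mul_comm, map_mul]

theorem pow_eq_one_of_surjective {H : Type*} [Monoid H] {n : ℕ} (hH : ∀ z : H, z ^ n = 1)
    (q : H →* G) (hq : Function.Surjective q) (g : G) : g ^ n = 1 := by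
  obtain ⟨z, rfl⟩ := hq g
  rw [← map_pow, hH, map_one]

end Group

theorem infinite_coprod_zmod_two :
    Infinite (Monoid.Coprod (Multiplicative (ZMod 2)) (Multiplicative (ZMod 2))) := by
  have hsr (i : ZMod 0) : DihedralGroup.sr i ^ 2 = 1 := by
    rw [sq, DihedralGroup.sr_mul_self]
  let ψ := Monoid.Coprod.lift (zmodPowHom 2 _ (hsr 0)) (zmodPowHom 2 _ (hsr 1))
  let c := Monoid.Coprod.inl (Multiplicative.ofAdd (1 : ZMod 2)) *
    Monoid.Coprod.inr (Multiplicative.ofAdd (1 : ZMod 2))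
  have hψc : ψ c = DihedralGroup.r 1 := by
    simp [ψ, c, ZMod.val_one, DihedralGroup.sr_mul_sr]
  have hc : orderOf c = 0 := by
    simpa [hψc, DihedralGroup.orderOf_r_one] using orderOf_map_dvd ψ c
  exact not_finite_iff_infinite.mp fun _ => (isOfFinOrder_of_finite c).orderOf_pos.ne' hc

/-- The quotient `F/N` of the free group `F(a,b)` by the normal closure of all
iterated images `σⁿ(a²), σⁿ(b²)` (where `σ : a ↦ ab, b ↦ b²`) is abelian of
exponent dividing 2; it is a quotient of `ℤ/2 × ℤ/2`, hence finite, and in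
particular not isomorphic to the infinite free product `ℤ/2 * ℤ/2`. -/
theorem quotient_of_noninvariant_Lpresentation_is_finite :
    (∀ g h : F₂ ⧸ Nab, g * h = h * g) ∧
    (∀ g : F₂ ⧸ Nab, g ^ 2 = 1) ∧
    (∃ q : Multiplicative (ZMod 2) × Multiplicative (ZMod 2) →* F₂ ⧸ Nab,
      Function.Surjective q) ∧
    Finite (F₂ ⧸ Nab) ∧
    IsEmpty ((F₂ ⧸ Nab) ≃*
      Monoid.Coprod (Multiplicative (ZMod 2)) (Multiplicative (ZMod 2))) := by
  have rel (n : ℕ) (i : Bool) : QuotientGroup.mk' Nab ((σab ^ n) (of i ^ 2)) = 1 :=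
    (QuotientGroup.eq_one_iff _).mpr (Subgroup.subset_normalClosure ⟨n, by cases i <;> simp⟩)
  have hσa : σab (of true) = of true * of false := rfl
  obtain ⟨q, hq⟩ := exists_surjective_zmod_two_prod_of_sq_eq_one (QuotientGroup.mk' Nab)
    (QuotientGroup.mk'_surjective Nab)
    (by simpa using rel 0 true) (by simpa using rel 0 false)
    (by simpa [hσa] using rel 1 true)
  have hsq : ∀ z : Multiplicative (ZMod 2) × Multiplicative (ZMod 2), z ^ 2 = 1 := by decide
  have hfin : Finite (F₂ ⧸ Nab) := .of_surjective q hq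
  refine ⟨mul_comm_of_surjective q hq, pow_eq_one_of_surjective hsq q hq, ⟨q, hq⟩, hfin,
    ⟨fun e => ?_⟩⟩
  exact not_finite_iff_infinite.mpr infinite_coprod_zmod_two (.of_equiv _ e.toEquiv)
end

section
/- Let F be a group, X a generating set of F that freely generates F, Φ ⊆ End(F), S a subset of the normal closure N_Φ(R) := ⟨⋃_{φ∈Φ*} R^φ⟩^F for some R ⊆ F, and σ ∈ Φ. Define σ̃ ∈ End(F) by σ̃(x) = σ(x)·r_x for each x ∈ X, where each r_x ∈ S. Then the normal closure of ⋃_{φ∈Φ*} (R ∪ S)^φ in F equals the normal closure of ⋃_{φ∈Ψ*} (R ∪ S)^φ, where Ψ := (Φ \ {σ}) ∪ {σ̃}. -/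
/-!
Write `N_Φ(T)` for the normal closure of `⋃_{φ∈Φ*} T^φ`; it is the least normal subgroup
containing `T` and invariant under every `φ ∈ Φ`. Both sides of the theorem contain `S`, so
modulo either of them `σ` and `σ̃` agree on the free generators and hence on all of `F`.
Consequently each side is invariant under both `σ` and `σ̃`, thus under `Φ` and `Ψ`, and by
minimality each contains the other.
-/

namespace Subgroup

variable {G : Type*} [Group G]

def iteratedNormalClosure (Φ : Set (Monoid.End G)) (T : Set G) : Subgroup G :=
  normalClosure (⋃ φ ∈ Submonoid.closure Φ, ⇑φ '' T)

variable {Φ : Set (Monoid.End G)} {T : Set G}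

instance iteratedNormalClosure_normal : (iteratedNormalClosure Φ T).Normal :=
  normalClosure_normal

theorem subset_iteratedNormalClosure : T ⊆ iteratedNormalClosure Φ T := fun t ht =>
  subset_normalClosure (Set.mem_iUnion₂.mpr ⟨1, one_mem _, t, ht, rfl⟩)

theorem map_mem_iteratedNormalClosure {φ : Monoid.End G} (hφ : φ ∈ Submonoid.closure Φ)
    {g : G} (hg : g ∈ iteratedNormalClosure Φ T) : φ g ∈ iteratedNormalClosure Φ T := by
  have hle : iteratedNormalClosure Φ T ≤ (iteratedNormalClosure Φ T).comap (φ : G →* G) := by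
    have := (iteratedNormalClosure_normal (Φ := Φ) (T := T)).comap (φ : G →* G)
    refine normalClosure_le_normal ?_
    simp only [Set.iUnion_subset_iff, Set.image_subset_iff]
    intro ψ hψ t ht
    exact subset_normalClosure (Set.mem_iUnion₂.mpr ⟨φ * ψ, mul_mem hφ hψ, t, ht, rfl⟩)
  exact hle hg

theorem iteratedNormalClosure_le {K : Subgroup G} [K.Normal] (hT : T ⊆ K)
    (hΦ : ∀ φ ∈ Φ, ∀ g ∈ K, φ g ∈ K) : iteratedNormalClosure Φ T ≤ K := by
  have hclosure : ∀ φ ∈ Submonoid.closure Φ, ∀ g ∈ K, φ g ∈ K := by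
    intro φ hφ
    induction hφ using Submonoid.closure_induction with
    | mem φ hφ => exact hΦ φ hφ
    | one => exact fun g hg => hg
    | mul φ ψ _ _ hφ hψ => exact fun g hg => hφ (ψ g) (hψ g hg)
  refine normalClosure_le_normal ?_
  simp only [Set.iUnion_subset_iff, Set.image_subset_iff]
  exact fun φ hφ t ht => hclosure φ hφ t (hT ht)

end Subgroup

namespace FreeGroup

theorem map_mem_iff_of_forall_of {X G : Type*} [Group G] {f g : FreeGroup X →* G}
    {K : Subgroup G} [K.Normal] (hfg : ∀ x, (f (of x))⁻¹ * g (of x) ∈ K) (a : FreeGroup X) :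
    f a ∈ K ↔ g a ∈ K := by
  have hmk : (QuotientGroup.mk' K).comp f = (QuotientGroup.mk' K).comp g :=
    ext_hom _ _ fun x => QuotientGroup.eq.mpr (hfg x)
  rw [← QuotientGroup.eq_one_iff, ← QuotientGroup.eq_one_iff (g a)]
  exact iff_of_eq (congrArg (· = 1) (DFunLike.congr_fun hmk a))

end FreeGroup

open Subgroup in
theorem normalClosure_modify_substitution_general {X : Type*}
    (Φ : Set (Monoid.End (FreeGroup X))) (R S : Set (FreeGroup X))
    (σ : Monoid.End (FreeGroup X)) (hσ : σ ∈ Φ)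
    (r : X → FreeGroup X) (hr : ∀ x, r x ∈ S)
    (σt : Monoid.End (FreeGroup X))
    (hσt : ∀ x, σt (FreeGroup.of x) = σ (FreeGroup.of x) * r x) :
    Subgroup.normalClosure (⋃ φ ∈ Submonoid.closure Φ, ⇑φ '' (R ∪ S)) =
      Subgroup.normalClosure
        (⋃ φ ∈ Submonoid.closure ((Φ \ {σ}) ∪ {σt}), ⇑φ '' (R ∪ S)) := by
  change iteratedNormalClosure Φ (R ∪ S) = iteratedNormalClosure ((Φ \ {σ}) ∪ {σt}) (R ∪ S)
  have hσσt : ∀ (K : Subgroup (FreeGroup X)) [K.Normal], R ∪ S ⊆ K →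
      ∀ g, σ g ∈ K ↔ σt g ∈ K := fun K _ hK =>
    FreeGroup.map_mem_iff_of_forall_of (f := (σ : _ →* _)) (g := σt) fun x => by
      change (σ (FreeGroup.of x))⁻¹ * σt (FreeGroup.of x) ∈ K
      rw [hσt, inv_mul_cancel_left]
      exact hK (Or.inr (hr x))
  apply le_antisymm
  · refine iteratedNormalClosure_le subset_iteratedNormalClosure fun φ hφ g hg => ?_
    by_cases hφσ : φ = σ
    · subst hφσ
      exact (hσσt _ subset_iteratedNormalClosure g).mpr
        (map_mem_iteratedNormalClosure (Submonoid.subset_closure (Or.inr rfl)) hg)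
    · exact map_mem_iteratedNormalClosure (Submonoid.subset_closure (Or.inl ⟨hφ, hφσ⟩)) hg
  · refine iteratedNormalClosure_le subset_iteratedNormalClosure fun φ hφ g hg => ?_
    rcases hφ with ⟨hφ, -⟩ | rfl
    · exact map_mem_iteratedNormalClosure (Submonoid.subset_closure hφ) hg
    · exact (hσσt _ subset_iteratedNormalClosure g).mp
        (map_mem_iteratedNormalClosure (Submonoid.subset_closure hσ) hg)

/-- Modifying a substitution of an L-presentation: if `S` is contained in the
normal closure of `⋃_{φ∈Φ*} R^φ`, `σ ∈ Φ`, and `σ̃` is the endomorphism of the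
free group `F(X)` with `σ̃(x) = σ(x)·r_x` for elements `r_x ∈ S`, then with
`Ψ = (Φ \ {σ}) ∪ {σ̃}` the normal closures of `⋃_{φ∈Φ*} (R ∪ S)^φ` and
`⋃_{φ∈Ψ*} (R ∪ S)^φ` coincide. -/
theorem normalClosure_modify_substitution {X : Type*}
    (Φ : Set (Monoid.End (FreeGroup X))) (R S : Set (FreeGroup X))
    (hS : S ⊆ (Subgroup.normalClosure
      (⋃ φ ∈ Submonoid.closure Φ, ⇑φ '' R) : Set (FreeGroup X)))
    (σ : Monoid.End (FreeGroup X)) (hσ : σ ∈ Φ)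
    (r : X → FreeGroup X) (hr : ∀ x, r x ∈ S)
    (σt : Monoid.End (FreeGroup X))
    (hσt : ∀ x, σt (FreeGroup.of x) = σ (FreeGroup.of x) * r x) :
    Subgroup.normalClosure (⋃ φ ∈ Submonoid.closure Φ, ⇑φ '' (R ∪ S)) =
      Subgroup.normalClosure
        (⋃ φ ∈ Submonoid.closure ((Φ \ {σ}) ∪ {σt}), ⇑φ '' (R ∪ S)) :=
  normalClosure_modify_substitution_general Φ R S σ hσ r hr σt hσt
end

section
/- Let G be a group, H ⊴ G a normal subgroup, and suppose every σ in a set Φ of endomorphisms of the free group F(X) descends, along a surjection π : F(X) → G with Φ-invariant kernel, to an automorphism of G that maps H onto H. If Q and R are the normal closures in G of sets of fixed and iterated relations respectively, then conjugation by any g ∈ G maps H to H; in particular, for a finitely generated group H admitting an ascending finite L-presentation ⟨Z | ∅ | {δ₁,…,δₙ} | R⟩ in which each δᵢ induces an automorphism of H, the iterated HNN-extension G = ⟨Z ∪ {t₁,…,tₙ} | R ∪ {tᵢ⁻¹ z tᵢ = δᵢ(z) : 1 ≤ i ≤ n, z ∈ Z}⟩ is finitely presented and contains an isomorphic copy of H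 as a normal subgroup. -/
/-!
Conjugation by the stable letter `tᵢ` realises `δᵢ` on the image of `F(Z)` in `G`, so every
`σ ∈ Δ*` acts on that image as an inner automorphism and the iterated relators `R^σ` already
hold in `G`; hence `H → G`. The image is normalised by the generators `z` trivially and by each
`tᵢ` because `δᵢ` induces an automorphism of `H`, so it is normal. It is a copy of `H` because `G`
maps to `H ⋊ F(t₁, …, tₙ)`, with `tᵢ` acting by the inverse of the automorphism induced by `δᵢ`,
and the composite `H → G → H ⋊ F` is the inclusion of the first factor. Finally `G` has finitely
many generators and relators: `R` and one relation for each pair `(i, z)`.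
-/

/-- A group is finitely presented if it is isomorphic to the quotient of a
finitely generated free group by the normal closure of finitely many relators. -/
def IsFinitelyPresentedGroup (G : Type*) [Group G] : Prop :=
  ∃ (k : ℕ) (rels : Finset (FreeGroup (Fin k))),
    Nonempty (G ≃* PresentedGroup (↑rels : Set (FreeGroup (Fin k))))

open Subgroup

section ConjugationEquivariant

variable {M G : Type*} [Monoid M] [Group G] (ψ : M →* G) {S : Set (Monoid.End M)}

theorem MonoidHom.exists_conj_of_mem_closure
    (hS : ∀ σ ∈ S, ∃ g : G, ∀ w, ψ (σ w) = g⁻¹ * ψ w * g) {φ : Monoid.End M}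
    (hφ : φ ∈ Submonoid.closure S) : ∃ g : G, ∀ w, ψ (φ w) = g⁻¹ * ψ w * g := by
  induction hφ using Submonoid.closure_induction with
  | mem σ hσ => exact hS σ hσ
  | one => exact ⟨1, fun w => by simp⟩
  | mul φ₁ φ₂ _ _ h₁ h₂ =>
    obtain ⟨g₁, hg₁⟩ := h₁
    obtain ⟨g₂, hg₂⟩ := h₂
    refine ⟨g₂ * g₁, fun w => ?_⟩
    rw [Monoid.End.coe_mul, Function.comp_apply, hg₁, hg₂]
    group

theorem MonoidHom.eq_one_of_mem_iUnion_image_closure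
    (hS : ∀ σ ∈ S, ∃ g : G, ∀ w, ψ (σ w) = g⁻¹ * ψ w * g) {R : Set M} (hR : ∀ r ∈ R, ψ r = 1) :
    ∀ r ∈ ⋃ φ ∈ Submonoid.closure S, ⇑φ '' R, ψ r = 1 := by
  simp only [Set.mem_iUnion]
  rintro _ ⟨φ, hφ, r, hr, rfl⟩
  obtain ⟨g, hg⟩ := ψ.exists_conj_of_mem_closure hS hφ
  rw [hg, hR r hr]
  group

end ConjugationEquivariant

theorem MonoidHom.mem_normalizer_range_of_conj {H G : Type*} [Group H] [Group G] (f : H →* G)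
    (α : H ≃* H) {t : G} (h : ∀ x, t⁻¹ * f x * t = f (α x)) : t ∈ normalizer (f.range : Set G) := by
  have hconj : (MulAut.conj t⁻¹).toMonoidHom.comp f = f.comp α.toMonoidHom := by
    ext x
    simp [h]
  have : f.range.map (MulAut.conj t⁻¹).toMonoidHom = f.range := by
    rw [← MonoidHom.range_comp, hconj, MonoidHom.range_comp,
      MonoidHom.range_eq_top_of_surjective _ α.surjective, ← MonoidHom.range_eq_map]
  exact inv_inv t ▸ inv_mem (mem_normalizer_iff_map_conj_eq.2 this)

theorem isFinitelyPresentedGroup_presentedGroup {α : Type*} [Finite α] {T : Set (FreeGroup α)}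
    (hT : T.Finite) : IsFinitelyPresentedGroup (PresentedGroup T) := by
  have : Fintype α := Fintype.ofFinite α
  let e := Fintype.equivFin α
  have hfin : (FreeGroup.freeGroupCongr e '' T).Finite := hT.image _
  refine ⟨Fintype.card α, hfin.toFinset, ⟨?_⟩⟩
  rw [hfin.coe_toFinset]
  exact PresentedGroup.equivPresentedGroup T e

section LPresentation

variable {Z I : Type*} (δ : I → Monoid.End (FreeGroup Z)) (R : Set (FreeGroup Z))

/-- The relators `R^σ`, `σ ∈ Δ*`, of the L-presentation `⟨Z | ∅ | Δ | R⟩`. -/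
def iteratedRelators : Set (FreeGroup Z) :=
  ⋃ φ ∈ Submonoid.closure (Set.range δ), ⇑φ '' R

def hnnRelator (i : I) (z : Z) : FreeGroup (Z ⊕ I) :=
  (FreeGroup.of (Sum.inr i))⁻¹ * FreeGroup.of (Sum.inl z) * FreeGroup.of (Sum.inr i) *
    (FreeGroup.map Sum.inl (δ i (FreeGroup.of z)))⁻¹

/-- The relators of the HNN-extension, whose stable letters are the generators `Sum.inr i`. -/
def hnnRelators : Set (FreeGroup (Z ⊕ I)) :=
  ⇑(FreeGroup.map Sum.inl) '' R ∪ {w | ∃ (i : I) (z : Z), w = hnnRelator δ i z}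

theorem hnnRelators_finite [Finite Z] [Finite I] (hR : R.Finite) : (hnnRelators δ R).Finite :=
  (hR.image _).union <| (Set.finite_range (Function.uncurry (hnnRelator δ))).subset <| by
    rintro _ ⟨i, z, rfl⟩
    exact ⟨(i, z), rfl⟩

def hnnBase : FreeGroup Z →* PresentedGroup (hnnRelators δ R) :=
  (PresentedGroup.mk _).comp (FreeGroup.map Sum.inl)

theorem hnnBase_apply_δ_eq_conj (i : I) (w : FreeGroup Z) :
    hnnBase δ R (δ i w) =
      (PresentedGroup.of (Sum.inr i))⁻¹ * hnnBase δ R w * PresentedGroup.of (Sum.inr i) := by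
  set t : PresentedGroup (hnnRelators δ R) := PresentedGroup.of (Sum.inr i)
  have hδ : ∀ z, hnnBase δ R (δ i (FreeGroup.of z)) = t⁻¹ * hnnBase δ R (FreeGroup.of z) * t :=
    fun z => (PresentedGroup.mk_eq_mk_of_mul_inv_mem (Or.inr ⟨i, z, rfl⟩)).symm
  have := FreeGroup.ext_hom ((hnnBase δ R).comp (δ i : FreeGroup Z →* FreeGroup Z))
    ((MulAut.conj t⁻¹).toMonoidHom.comp (hnnBase δ R)) fun z => (hδ z).trans (by simp)
  exact (DFunLike.congr_fun this w).trans (by simp)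

theorem hnnBase_eq_one_of_mem_iteratedRelators :
    ∀ r ∈ iteratedRelators δ R, hnnBase δ R r = 1 :=
  (hnnBase δ R).eq_one_of_mem_iUnion_image_closure
    (by rintro _ ⟨i, rfl⟩; exact ⟨_, hnnBase_apply_δ_eq_conj δ R i⟩)
    fun _ hr => PresentedGroup.one_of_mem (Or.inl ⟨_, hr, rfl⟩)

abbrev LPresentedGroup : Type _ := FreeGroup Z ⧸ normalClosure (iteratedRelators δ R)

def hnnEmbedding : LPresentedGroup δ R →* PresentedGroup (hnnRelators δ R) :=
  QuotientGroup.lift _ (hnnBase δ R)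
    (normalClosure_le_normal (hnnBase_eq_one_of_mem_iteratedRelators δ R))

variable {δ R} (α : I → LPresentedGroup δ R ≃* LPresentedGroup δ R)
  (hα : ∀ i w, α i (QuotientGroup.mk' _ w) = QuotientGroup.mk' _ (δ i w))

include hα in
theorem hnnEmbedding_conj (i : I) (h : LPresentedGroup δ R) :
    (PresentedGroup.of (Sum.inr i))⁻¹ * hnnEmbedding δ R h * PresentedGroup.of (Sum.inr i) =
      hnnEmbedding δ R (α i h) := by
  refine QuotientGroup.induction_on h fun w => ?_
  rw [show (w : LPresentedGroup δ R) = QuotientGroup.mk' _ w from rfl, hα]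
  exact (hnnBase_apply_δ_eq_conj δ R i w).symm

include hα in
theorem hnnEmbedding_range_normal : (hnnEmbedding δ R).range.Normal := by
  refine normalizer_eq_top_iff.1 (eq_top_iff.2 fun g _ => PresentedGroup.generated_by _ _ ?_ g)
  rintro (z | i)
  · exact le_normalizer ⟨QuotientGroup.mk' _ (FreeGroup.of z), rfl⟩
  · exact (hnnEmbedding δ R).mem_normalizer_range_of_conj (α i) (hnnEmbedding_conj α hα i)

def hnnSemidirectGen :
    Z ⊕ I → LPresentedGroup δ R ⋊[FreeGroup.lift fun i => (α i)⁻¹] FreeGroup I :=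
  Sum.elim (fun z => SemidirectProduct.inl (QuotientGroup.mk' _ (FreeGroup.of z)))
    fun i => SemidirectProduct.inr (FreeGroup.of i)

theorem lift_hnnSemidirectGen_map_inl (w : FreeGroup Z) :
    FreeGroup.lift (hnnSemidirectGen α) (FreeGroup.map Sum.inl w) =
      SemidirectProduct.inl (QuotientGroup.mk' _ w) := by
  have : (FreeGroup.lift (hnnSemidirectGen α)).comp (FreeGroup.map Sum.inl) =
      SemidirectProduct.inl.comp (QuotientGroup.mk' _) :=
    FreeGroup.ext_hom _ _ fun z => by simp [hnnSemidirectGen]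
  exact DFunLike.congr_fun this w

include hα in
theorem lift_hnnSemidirectGen_eq_one : ∀ r ∈ hnnRelators δ R,
    FreeGroup.lift (hnnSemidirectGen α) r = 1 := by
  rintro _ (⟨r, hr, rfl⟩ | ⟨i, z, rfl⟩)
  · rw [lift_hnnSemidirectGen_map_inl, ← map_one SemidirectProduct.inl]
    exact congrArg _ ((QuotientGroup.eq_one_iff r).2
      (subset_normalClosure (Set.mem_biUnion (Submonoid.one_mem _) ⟨r, hr, rfl⟩)))
  · have hconj : (FreeGroup.lift fun i => (α i)⁻¹) (FreeGroup.of i) = (α i)⁻¹ :=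
      FreeGroup.lift_apply_of
    rw [hnnRelator, map_mul, map_mul, map_mul, map_inv, map_inv, lift_hnnSemidirectGen_map_inl,
      FreeGroup.lift_apply_of, FreeGroup.lift_apply_of]
    change (SemidirectProduct.inr (FreeGroup.of i))⁻¹ *
      SemidirectProduct.inl (QuotientGroup.mk' _ (FreeGroup.of z)) *
      SemidirectProduct.inr (FreeGroup.of i) * _ = _
    rw [← map_inv, ← SemidirectProduct.inl_aut_inv, hconj, inv_inv, hα, mul_inv_cancel]

def hnnToSemidirectProduct :
    PresentedGroup (hnnRelators δ R) →*
      LPresentedGroup δ R ⋊[FreeGroup.lift fun i => (α i)⁻¹] FreeGroup I :=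
  PresentedGroup.toGroup (lift_hnnSemidirectGen_eq_one α hα)

theorem hnnToSemidirectProduct_hnnEmbedding (h : LPresentedGroup δ R) :
    hnnToSemidirectProduct α hα (hnnEmbedding δ R h) = SemidirectProduct.inl h :=
  QuotientGroup.induction_on h (lift_hnnSemidirectGen_map_inl α)

include hα in
theorem hnnEmbedding_injective : Function.Injective (hnnEmbedding δ R) := fun a b hab =>
  SemidirectProduct.inl_injective (φ := FreeGroup.lift fun i => (α i)⁻¹) <| by
    rw [← hnnToSemidirectProduct_hnnEmbedding α hα, hab, hnnToSemidirectProduct_hnnEmbedding]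

end LPresentation

/-- A group `H` with an ascending (hence invariant) finite L-presentation
`⟨Z | ∅ | {δ₁,…,δₙ} | R⟩` in which each `δᵢ` induces an automorphism of `H`
embeds as a normal subgroup into the finitely presented iterated HNN-extension
`G = ⟨Z ∪ {t₁,…,tₙ} | R ∪ {tᵢ⁻¹ z tᵢ = δᵢ(z)}⟩`. -/
theorem embeds_normally_into_finitely_presented {Z : Type*} [Fintype Z]
    (n : ℕ) (δ : Fin n → Monoid.End (FreeGroup Z)) (R : Finset (FreeGroup Z))
    (rels : Set (FreeGroup Z))
    (hrels : rels = ⋃ φ ∈ Submonoid.closure (Set.range δ),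
      ⇑φ '' (↑R : Set (FreeGroup Z)))
    (hinv : ∀ i : Fin n,
      ∃ α : (FreeGroup Z ⧸ Subgroup.normalClosure rels) ≃*
            (FreeGroup Z ⧸ Subgroup.normalClosure rels),
        ∀ w : FreeGroup Z,
          α (QuotientGroup.mk' (Subgroup.normalClosure rels) w) =
            QuotientGroup.mk' (Subgroup.normalClosure rels) (δ i w))
    (ι : FreeGroup Z →* FreeGroup (Z ⊕ Fin n))
    (hι : ι = FreeGroup.map Sum.inl)
    (T : Set (FreeGroup (Z ⊕ Fin n)))
    (hT : T = (⇑ι '' (↑R : Set (FreeGroup Z))) ∪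
      {w | ∃ (i : Fin n) (z : Z),
        w = (FreeGroup.of (Sum.inr i))⁻¹ * FreeGroup.of (Sum.inl z) *
            FreeGroup.of (Sum.inr i) * (ι (δ i (FreeGroup.of z)))⁻¹}) :
    IsFinitelyPresentedGroup (PresentedGroup T) ∧
      ∃ N : Subgroup (PresentedGroup T), N.Normal ∧
        Nonempty ((FreeGroup Z ⧸ Subgroup.normalClosure rels) ≃* N) := by
  subst hrels hι hT
  choose α hα using hinv
  exact ⟨isFinitelyPresentedGroup_presentedGroup (hnnRelators_finite δ _ R.finite_toSet),
    (hnnEmbedding δ R).range, hnnEmbedding_range_normal α hα,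
    ⟨MonoidHom.ofInjective (hnnEmbedding_injective α hα)⟩⟩
end
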